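/- (Extraction Lemma) Let R be a TRS and Π a set of forbidden patterns. If C[s]_p →_{R,Π} C[t]_p by a step contracting a redex at a position at or below p, then s →_{R,Π} t. -/
import Mathlib


set_option autoImplicit false

namespace FP

/-- First-order terms over a signature `F` with arities `ar`; variables are naturals. -/
inductive Tm (F : Type) (ar : F → ℕ) : Type
  | var : ℕ → Tm F ar
  | app : (f : F) → (Fin (ar f) → Tm F ar) → Tm F ar

variable {F : Type} {ar : F → ℕ}

/-- The subterm of `t` at position `p` (if `p` is a position of `t`). -/
def subtermAt : Tm F ar → List ℕ → Option (Tm F ar)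
  | t, [] => some t
  | .var _, _ :: _ => none
  | .app f ts, i :: p => if h : i < ar f then subtermAt (ts ⟨i, h⟩) p else none

/-- Replacement `t[s]_p` (if `p` is a position of `t`). -/
def replaceAt : Tm F ar → List ℕ → Tm F ar → Option (Tm F ar)
  | _, [], s => some s
  | .var _, _ :: _, _ => none
  | .app f ts, i :: p, s =>
      if h : i < ar f then
        (replaceAt (ts ⟨i, h⟩) p s).map fun u => Tm.app f (Function.update ts ⟨i, h⟩ u)
      else none

/-- Filling a context `(c, p)` (a term `c` together with a hole position `p`) with `s`,
i.e. `c[s]_p`. -/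
def fill (c : Tm F ar) (p : List ℕ) (s : Tm F ar) : Tm F ar :=
  (replaceAt c p s).getD s

/-- `p ∈ Pos t`. -/
def IsPos (t : Tm F ar) (p : List ℕ) : Prop := (subtermAt t p).isSome

/-- Application of a substitution. -/
def subst (σ : ℕ → Tm F ar) : Tm F ar → Tm F ar
  | .var x => σ x
  | .app f ts => Tm.app f fun i => subst σ (ts i)

/-- The set of variables of a term. -/
def vars : Tm F ar → Set ℕ
  | .var x => {x}
  | .app _ ts => ⋃ i, vars (ts i)

/-- A rewrite rule `lhs → rhs`. -/
structure Rule (F : Type) (ar : F → ℕ) where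
  lhs : Tm F ar
  rhs : Tm F ar

/-- `R` is a TRS: left-hand sides are no variables und `Var(r) ⊆ Var(l)`. -/
def IsTRS (R : Set (Rule F ar)) : Prop :=
  ∀ r ∈ R, (∀ x, r.lhs ≠ Tm.var x) ∧ vars r.rhs ⊆ vars r.lhs

/-- `s →_R t` contracting the redex at position `p`. -/
def RewriteAt (R : Set (Rule F ar)) (p : List ℕ) (s t : Tm F ar) : Prop :=
  ∃ r ∈ R, ∃ σ : ℕ → Tm F ar,
    subtermAt s p = some (subst σ r.lhs) ∧ replaceAt s p (subst σ r.rhs) = some t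

/-- `p < q` : strict prefix of positions. -/
def StrictPrefix (p q : List ℕ) : Prop := p <+: q ∧ p ≠ q

/-- `p ∥ q` : parallel (incomparable) positions. -/
def Par (p q : List ℕ) : Prop := ¬ p <+: q ∧ ¬ q <+: p

/-- Flags of forbidden patterns: here / below / above. -/
inductive Flag : Type
  | h | b | a
deriving DecidableEq

/-- A forbidden pattern `⟨t, p, λ⟩`. -/
structure Pattern (F : Type) (ar : F → ℕ) where
  pat : Tm F ar
  pos : List ℕ
  flag : Flag

/-- `q ∈ P_{t,p}(s)` : `q = o.p` for a match `s|_o = tσ`. -/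
def PTP (t : Tm F ar) (p : List ℕ) (s : Tm F ar) (q : List ℕ) : Prop :=
  ∃ (o : List ℕ) (σ : ℕ → Tm F ar), subtermAt s o = some (subst σ t) ∧ q = o ++ p

/-- `o ∈ P_π(s)`. -/
def PPat (π : Pattern F ar) (s : Tm F ar) (o : List ℕ) : Prop :=
  match π.flag with
  | Flag.a => ∃ q, PTP π.pat π.pos s q ∧ StrictPrefix o q
  | Flag.b => ∃ q, PTP π.pat π.pos s q ∧ StrictPrefix q o
  | Flag.h => PTP π.pat π.pos s o

/-- Position `o` is forbidden in `s` w.r.t. the pattern set `Pi`. -/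
def Forbidden (Pi : Set (Pattern F ar)) (s : Tm F ar) (o : List ℕ) : Prop :=
  ∃ π ∈ Pi, PPat π s o

/-- A forbidden-pattern rewrite step at position `p` : an `R`-step at an allowed position. -/
def FPStepAt (R : Set (Rule F ar)) (Pi : Set (Pattern F ar)) (p : List ℕ)
    (s t : Tm F ar) : Prop :=
  RewriteAt R p s t ∧ ¬ Forbidden Pi s p

/-- `s →_{R,Π} t`. -/
def FPStep (R : Set (Rule F ar)) (Pi : Set (Pattern F ar)) (s t : Tm F ar) : Prop :=
  ∃ p, FPStepAt R Pi p s t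

/-- `R` is `Π`-terminating: there is no infinite `→_{R,Π}`-sequence. -/
def PiTerminating (R : Set (Rule F ar)) (Pi : Set (Pattern F ar)) : Prop :=
  ¬ ∃ f : ℕ → Tm F ar, ∀ n, FPStep R Pi (f n) (f (n + 1))

/-- The subterm of `w` at `p` is `Π`-terminating in its context: there is no infinite
`→_{R,Π}`-sequence from `w` with all steps at, below or parallel to `p` and
infinitely many steps at or below `p`. -/
def TermAtPos (R : Set (Rule F ar)) (Pi : Set (Pattern F ar)) (w : Tm F ar)
    (p : List ℕ) : Prop :=
  ¬ ∃ (f : ℕ → Tm F ar) (q : ℕ → List ℕ),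
      f 0 = w ∧ (∀ n, FPStepAt R Pi (q n) (f n) (f (n + 1))) ∧
      (∀ n, ¬ StrictPrefix (q n) p) ∧ (∀ m, ∃ n, m ≤ n ∧ p <+: q n)

/-- `s` is `Π`-terminating in the context `C[□]_p`. -/
def TermInCtx (R : Set (Rule F ar)) (Pi : Set (Pattern F ar)) (C : Tm F ar)
    (p : List ℕ) (s : Tm F ar) : Prop :=
  TermAtPos R Pi (fill C p s) p

/-- `s` is minimally non-`Π`-terminating in the context `C[□]_q` : `s` is
non-`Π`-terminating in `C[□]_q` and every proper subterm `s|_p` is `Π`-terminating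
in the context `C[s[□]_p]_q`. -/
def MinNonTerm (R : Set (Rule F ar)) (Pi : Set (Pattern F ar)) (C : Tm F ar)
    (q : List ℕ) (s : Tm F ar) : Prop :=
  ¬ TermInCtx R Pi C q s ∧
  ∀ p u, p ≠ [] → subtermAt s p = some u → TermAtPos R Pi (fill C q s) (q ++ p)

/-- Linearity of a term. -/
def Linear (t : Tm F ar) : Prop :=
  ∀ x p q, subtermAt t p = some (Tm.var x) → subtermAt t q = some (Tm.var x) → p = q

/-- The rule `r` overlaps the term `t` at (non-variable) position `p` :
`r.lhs` and `t|_p` unify (for variable-disjoint terms: they have a common instance). -/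
def OverlapsAt (r : Rule F ar) (t : Tm F ar) (p : List ℕ) : Prop :=
  ∃ u, subtermAt t p = some u ∧ (∃ f ts, u = Tm.app f ts) ∧
    ∃ σ τ : ℕ → Tm F ar, subst σ r.lhs = subst τ u

/-- Stability of a forbidden pattern w.r.t. `R`. -/
def StablePat (R : Set (Rule F ar)) (π : Pattern F ar) : Prop :=
  Linear π.pat ∧
  ((π.flag = Flag.b ∧ ∀ r ∈ R, ∀ p, Par p π.pos → ¬ OverlapsAt r π.pat p) ∨
   (π.flag = Flag.h ∧
      ∀ r ∈ R, ∀ p, (Par p π.pos ∨ StrictPrefix π.pos p) → ¬ OverlapsAt r π.pat p))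

/-- `Stb(Π)` : the stable patterns of `Π`. -/
def Stb (R : Set (Rule F ar)) (Pi : Set (Pattern F ar)) : Set (Pattern F ar) :=
  {π ∈ Pi | StablePat R π}

/-- `Π_orth` : the patterns of `Π` with flag `h` or `b`, linear, and not overlapped by
any rule of `R` at any position parallel to or below the pattern position. -/
def PiOrth (R : Set (Rule F ar)) (Pi : Set (Pattern F ar)) : Set (Pattern F ar) :=
  {π ∈ Pi | (π.flag = Flag.h ∨ π.flag = Flag.b) ∧ Linear π.pat ∧
    ∀ r ∈ R, ∀ p, (Par p π.pos ∨ StrictPrefix π.pos p) → ¬ OverlapsAt r π.pat p}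

/-! ### The extended signature with marked symbols and the token symbol `T` -/

/-- The extension of the signature `F` by a marked copy `f#` of each symbol and a
fresh token symbol `T`. -/
inductive ESym (F : Type) : Type
  | base : F → ESym F
  | mark : F → ESym F
  | token : ESym F

/-- Arities on the extended signature (the token symbol is unary). -/
def ear (ar : F → ℕ) : ESym F → ℕ
  | .base f => ar f
  | .mark f => ar f
  | .token => 1

/-- Terms over the extended signature. -/
abbrev ETm (F : Type) (ar : F → ℕ) : Type := Tm (ESym F) (ear ar)

/-- Embedding of terms into the extended signature. -/
def embed : Tm F ar → ETm F ar
  | .var x => .var x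
  | .app f ts => .app (ESym.base f) fun i => embed (ts i)

/-- `erase` : unmark all marked symbols and replace `T(s')` by `s'`. -/
def eraseT : ETm F ar → Tm F ar
  | .var x => .var x
  | .app (ESym.base f) ts => .app f fun i => eraseT (ts i)
  | .app (ESym.mark f) ts => .app f fun i => eraseT (ts i)
  | .app ESym.token ts => eraseT (ts ⟨0, Nat.one_pos⟩)

/-- Mark the root symbol of a term (`l#`). -/
def markRoot : Tm F ar → ETm F ar
  | .var x => .var x
  | .app f ts => .app (ESym.mark f) fun i => embed (ts i)

/-- `T(u)`. -/
def tok (u : ETm F ar) : ETm F ar := Tm.app ESym.token fun _ => u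

def embedRule (r : Rule F ar) : Rule (ESym F) (ear ar) := ⟨embed r.lhs, embed r.rhs⟩

def embedTRS (R : Set (Rule F ar)) : Set (Rule (ESym F) (ear ar)) := embedRule '' R

/-- A contextual rule `lhs → rhs [c]`, the context given as a term `ctx` over the
extended signature together with its hole position `cpos`. -/
structure CRule (F : Type) (ar : F → ℕ) where
  lhs : ETm F ar
  rhs : ETm F ar
  ctx : ETm F ar
  cpos : List ℕ

/-- `f` is a defined symbol of `R`. -/
def Defined (R : Set (Rule F ar)) (f : F) : Prop :=
  ∃ r ∈ R, ∃ ts, r.lhs = Tm.app f ts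

/-- `f` occurs in the right-hand side of some rule of `R`. -/
def OccursInRhs (R : Set (Rule F ar)) (f : F) : Prop :=
  ∃ r ∈ R, ∃ p ts, subtermAt r.rhs p = some (Tm.app f ts)

/-- `DP_c(R)` : the contextual dependency pairs
`l# → (r|_p)# [r[□]_p]` for `p` a position of `r` with defined root that is not
forbidden w.r.t. `Stb(Π)`. -/
def DPc (R : Set (Rule F ar)) (Pi : Set (Pattern F ar)) : Set (CRule F ar) :=
  { c | ∃ r ∈ R, ∃ p u, subtermAt r.rhs p = some u ∧
      (∃ f ts, u = Tm.app f ts ∧ Defined R f) ∧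
      ¬ Forbidden (Stb R Pi) r.rhs p ∧
      c = ⟨markRoot r.lhs, markRoot u, embed r.rhs, p⟩ }

/-- `V_c(R)` : the variable-descent pairs `l# → T(x) [r[□]_p]` for `r|_p = x ∈ Var`. -/
def Vc (R : Set (Rule F ar)) : Set (CRule F ar) :=
  { c | ∃ r ∈ R, ∃ p x, subtermAt r.rhs p = some (Tm.var x) ∧
      c = ⟨markRoot r.lhs, tok (Tm.var x), embed r.rhs, p⟩ }

/-- `A_c(R)` : the activation pairs `T(f(x₁,…,x_k)) → f#(x₁,…,x_k) [□]` for
defined `f` occurring in some right-hand side. -/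
def Ac (R : Set (Rule F ar)) : Set (CRule F ar) :=
  { c | ∃ f, Defined R f ∧ OccursInRhs R f ∧
      c = ⟨tok (Tm.app (ESym.base f) fun j => Tm.var j.val),
           Tm.app (ESym.mark f) fun j => Tm.var j.val,
           Tm.var 0, []⟩ }

/-- `S_c(R)` : the shift pairs `T(f(x₁,…,x_k)) → T(x_i) [f(x₁,…,□,…,x_k)]` for
`f` occurring in some right-hand side. -/
def Sc (R : Set (Rule F ar)) : Set (CRule F ar) :=
  { c | ∃ f, OccursInRhs R f ∧ ∃ i : Fin (ar f),
      c = ⟨tok (Tm.app (ESym.base f) fun j => Tm.var j.val),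
           tok (Tm.var i.val),
           Tm.app (ESym.base f) fun j => Tm.var j.val,
           [i.val]⟩ }

/-- `CDP(R)` : all (extended) contextual dependency pairs of `R` w.r.t. `Π`. -/
def CDP (R : Set (Rule F ar)) (Pi : Set (Pattern F ar)) : Set (CRule F ar) :=
  DPc R Pi ∪ Vc R ∪ Ac R ∪ Sc R

/-- No occurrence of the token symbol `T`. -/
def TokenFree (u : ETm F ar) : Prop :=
  ∀ (p : List ℕ) (ts : Fin (ear ar ESym.token) → ETm F ar),
    subtermAt u p ≠ some (Tm.app ESym.token ts)

/-- The token symbol occurs at most at the root. -/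
def TokenOnlyRoot (u : ETm F ar) : Prop :=
  TokenFree u ∨ ∃ w, u = tok w ∧ TokenFree w

/-- `(P, R, Π, T)` is an FP-CDP problem: the token symbol occurs only at the root of
left- and right-hand sides of `P` (and not in contexts). -/
def IsCDPProblem (P : Set (CRule F ar)) : Prop :=
  ∀ c ∈ P, TokenOnlyRoot c.lhs ∧ TokenOnlyRoot c.rhs ∧ TokenFree c.ctx

/-- `p_i'` : the accumulated hole positions `p_1.p_2.⋯.p_i` of a sequence of CDPs. -/
def chainPos (α : ℕ → CRule F ar) : ℕ → List ℕ
  | 0 => []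
  | n + 1 => chainPos α n ++ (α n).cpos

/-- One `→_P`-step with contextual rule `c` (read as `lhs → ctx[rhs]`) under
substitution `σ` at position `p` : from `s` to `t`. -/
def cStep (c : CRule F ar) (σ : ℕ → ETm F ar) (p : List ℕ) (s t : ETm F ar) : Prop :=
  subtermAt s p = some (subst σ c.lhs) ∧
  replaceAt s p (fill (subst σ c.ctx) c.cpos (subst σ c.rhs)) = some t

/-- A finite `→*_R`-segment of a chain from `u` to `v` : all steps at positions
not above-or-equal `p` and each step allowed (w.r.t. `Π`) in the erased term. -/
def RSeg (R : Set (Rule F ar)) (Pi : Set (Pattern F ar)) (p : List ℕ)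
    (u v : ETm F ar) : Prop :=
  ∃ (m : ℕ) (g : ℕ → ETm F ar) (q : ℕ → List ℕ), g 0 = u ∧ g m = v ∧
    ∀ k < m, RewriteAt (embedTRS R) (q k) (g k) (g (k + 1)) ∧
      ¬ q k <+: p ∧ ¬ Forbidden Pi (eraseT (g k)) (q k)

/-- Witness data for an infinite FP-CDP chain `α` of the problem `(P, R, Π, T)` :
a family of substitutions `σ` (the pairs are renamed apart) and the terms `A i`
(before the `i`-th `→_P`-step) and `B i` (after it). -/
def ChainWitness (P : Set (CRule F ar)) (R : Set (Rule F ar)) (Pi : Set (Pattern F ar))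
    (α : ℕ → CRule F ar) (σ : ℕ → ℕ → ETm F ar) (A B : ℕ → ETm F ar) : Prop :=
  (∀ i, α i ∈ P) ∧
  (∀ i, cStep (α i) (σ i) (chainPos α i) (A i) (B i)) ∧
  (∀ i, ¬ Forbidden Pi (eraseT (A i)) (chainPos α i)) ∧
  (∀ i, RSeg R Pi (chainPos α (i + 1)) (B i) (A (i + 1))) ∧
  (∀ i, (∃ ts, (α i).rhs = Tm.app ESym.token ts) → B i = A (i + 1))

/-- `α` is an infinite FP-CDP chain of `(P, R, Π, T)`. -/
def IsChain (P : Set (CRule F ar)) (R : Set (Rule F ar)) (Pi : Set (Pattern F ar))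
    (α : ℕ → CRule F ar) : Prop :=
  ∃ σ A B, ChainWitness P R Pi α σ A B

/-- The subterm of the extended term `w` at `p` is `Π`-terminating in its context
(w.r.t. `R`) : no infinite restricted reduction (allowedness checked on erased terms). -/
def TermAtPosE (R : Set (Rule F ar)) (Pi : Set (Pattern F ar)) (w : ETm F ar)
    (p : List ℕ) : Prop :=
  ¬ ∃ (f : ℕ → ETm F ar) (q : ℕ → List ℕ),
      f 0 = w ∧
      (∀ n, RewriteAt (embedTRS R) (q n) (f n) (f (n + 1)) ∧
        ¬ Forbidden Pi (eraseT (f n)) (q n)) ∧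
      (∀ n, ¬ StrictPrefix (q n) p) ∧ (∀ m, ∃ n, m ≤ n ∧ p <+: q n)

/-- Minimality of a chain: every subterm of `c_i'[t_iσ]_{p_i'}` strictly below `p_i'`
is `Π`-terminating in its context (w.r.t. `R`). -/
def MinCond (R : Set (Rule F ar)) (Pi : Set (Pattern F ar)) (α : ℕ → CRule F ar)
    (B : ℕ → ETm F ar) : Prop :=
  ∀ i q, StrictPrefix (chainPos α (i + 1)) q → IsPos (B i) q → TermAtPosE R Pi (B i) q

/-- `α` is an infinite minimal FP-CDP chain of `(P, R, Π, T)`. -/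
def IsMinChain (P : Set (CRule F ar)) (R : Set (Rule F ar)) (Pi : Set (Pattern F ar))
    (α : ℕ → CRule F ar) : Prop :=
  ∃ σ A B, ChainWitness P R Pi α σ A B ∧ MinCond R Pi α B

/-- Witness data for a finite FP-CDP chain `α 0, …, α (n-1)`. -/
def FinChainWitness (P : Set (CRule F ar)) (R : Set (Rule F ar)) (Pi : Set (Pattern F ar))
    (n : ℕ) (α : ℕ → CRule F ar) (σ : ℕ → ℕ → ETm F ar) (A B : ℕ → ETm F ar) : Prop :=
  (∀ i < n, α i ∈ P) ∧
  (∀ i < n, cStep (α i) (σ i) (chainPos α i) (A i) (B i)) ∧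
  (∀ i < n, ¬ Forbidden Pi (eraseT (A i)) (chainPos α i)) ∧
  (∀ i, i + 1 < n → RSeg R Pi (chainPos α (i + 1)) (B i) (A (i + 1))) ∧
  (∀ i, i + 1 < n → (∃ ts, (α i).rhs = Tm.app ESym.token ts) → B i = A (i + 1))

/-- `α 0, …, α (n-1)` is a finite FP-CDP chain of `(P, R, Π, T)`. -/
def IsFinChain (P : Set (CRule F ar)) (R : Set (Rule F ar)) (Pi : Set (Pattern F ar))
    (n : ℕ) (α : ℕ → CRule F ar) : Prop :=
  ∃ σ A B, FinChainWitness P R Pi n α σ A B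

/-- The FP-CDP problem `(P, R, Π, T)` is finite: no infinite minimal FP-CDP chain. -/
def FiniteProb (P : Set (CRule F ar)) (R : Set (Rule F ar)) (Pi : Set (Pattern F ar)) :
    Prop :=
  ¬ ∃ α : ℕ → CRule F ar, IsMinChain P R Pi α

/-- Nesting a list of contexts around an inner term:
`nest [(c₁,p₁),…,(c_n,p_n)] t = c₁[c₂[… c_n[t]_{p_n} …]_{p₂}]_{p₁}`. -/
def nest : List (Tm F ar × List ℕ) → Tm F ar → Tm F ar
  | [], t => t
  | (c, p) :: rest, t => fill c p (nest rest t)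

/-- `p_1.p_2.⋯.p_n` for the first `n` contexts of a sequence of CDPs. -/
def seqPos (β : ℕ → CRule F ar) (n : ℕ) : List ℕ :=
  (List.range n).foldr (fun i acc => (β i).cpos ++ acc) []

/-- The nested-context term `c_1[c_2[… c_n[erase(t_n)]_{p_n} …]_{p_2}]_{p_1}` of the
first `n` CDPs of a sequence. -/
def seqNest (β : ℕ → CRule F ar) (n : ℕ) : Tm F ar :=
  nest ((List.range n).map fun i => (eraseT (β i).ctx, (β i).cpos))
    (eraseT (β (n - 1)).rhs)

/-- Reading a contextual rule `l → r [c]` as the plain rule `l → c[r]`. -/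
def plainCRule (c : CRule F ar) : Rule (ESym F) (ear ar) :=
  ⟨c.lhs, fill c.ctx c.cpos c.rhs⟩

theorem isPos_cons' {f : F} {ts : Fin (ar f) → Tm F ar} {i : ℕ} {p : List ℕ}
    (h : IsPos (Tm.app f ts) (i :: p)) :
    ∃ hi : i < ar f, IsPos (ts ⟨i, hi⟩) p := by
  unfold IsPos subtermAt at h
  split at h
  · exact ⟨_, h⟩
  · simp at h

theorem replaceAt_isSome' : ∀ (p : List ℕ) (C s : Tm F ar),
    IsPos C p → (replaceAt C p s).isSome
  | [], _, _, _ => by simp [replaceAt]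
  | _ :: _, .var _, _, h => by simp [IsPos, subtermAt] at h
  | i :: p, .app f ts, s, h => by
    obtain ⟨hi, h'⟩ := isPos_cons' h
    have := replaceAt_isSome' p (ts ⟨i, hi⟩) s h'
    simp only [replaceAt, dif_pos hi]
    simpa using this

theorem fill_cons' {f : F} {ts : Fin (ar f) → Tm F ar} {i : ℕ} {hi : i < ar f}
    {p : List ℕ} {s : Tm F ar} (h : IsPos (ts ⟨i, hi⟩) p) :
    fill (Tm.app f ts) (i :: p) s
      = Tm.app f (Function.update ts ⟨i, hi⟩ (fill (ts ⟨i, hi⟩) p s)) := by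
  obtain ⟨v, hv⟩ := Option.isSome_iff_exists.mp (replaceAt_isSome' p _ s h)
  simp [fill, replaceAt, hi, hv]

theorem subtermAt_fill_append : ∀ (p : List ℕ) (C : Tm F ar), IsPos C p →
    ∀ (s : Tm F ar) (q : List ℕ), subtermAt (fill C p s) (p ++ q) = subtermAt s q
  | [], _, _, _, _ => by simp [fill, replaceAt]
  | _ :: _, .var _, h, _, _ => by simp [IsPos, subtermAt] at h
  | i :: p, .app f ts, h, s, q => by
    obtain ⟨hi, h'⟩ := isPos_cons' h
    rw [fill_cons' h']
    show subtermAt _ (i :: (p ++ q)) = _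
    simp only [subtermAt, dif_pos hi, Function.update_self]
    exact subtermAt_fill_append p _ h' s q

theorem replaceAt_fill_append : ∀ (p : List ℕ) (C : Tm F ar), IsPos C p →
    ∀ (s u : Tm F ar) (q : List ℕ),
    replaceAt (fill C p s) (p ++ q) u = (replaceAt s q u).map (fill C p)
  | [], C, _, s, u, q => by
    have hf : ∀ x : Tm F ar, fill C [] x = x := fun x => by simp [fill, replaceAt]
    rw [List.nil_append, hf]
    cases replaceAt s q u <;> simp [hf]
  | _ :: _, .var _, h, _, _, _ => by simp [IsPos, subtermAt] at h
  | i :: p, .app f ts, h, s, u, q => by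
    obtain ⟨hi, h'⟩ := isPos_cons' h
    rw [fill_cons' h']
    show replaceAt _ (i :: (p ++ q)) u = _
    simp only [replaceAt, dif_pos hi, Function.update_self]
    rw [replaceAt_fill_append p _ h' s u q, Option.map_map]
    cases replaceAt s q u with
    | none => rfl
    | some v =>
      simp only [Option.map_some, Function.comp_apply]
      rw [Function.update_idem, fill_cons' h']

theorem ptp_lift {t : Tm F ar} {pp : List ℕ} {s : Tm F ar} {q : List ℕ}
    (h : PTP t pp s q) (C : Tm F ar) (p : List ℕ) (hp : IsPos C p) :
    PTP t pp (fill C p s) (p ++ q) := by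
  obtain ⟨o, σ, h1, h2⟩ := h
  exact ⟨p ++ o, σ, by rw [subtermAt_fill_append p C hp, h1],
    by rw [h2, List.append_assoc]⟩

theorem strictPrefix_lift {a b p : List ℕ} (h : StrictPrefix a b) :
    StrictPrefix (p ++ a) (p ++ b) := by
  obtain ⟨⟨c, hc⟩, hne⟩ := h
  refine ⟨⟨c, by rw [List.append_assoc, hc]⟩, ?_⟩
  intro hcontra
  exact hne (List.append_cancel_left hcontra)

theorem forbidden_lift {Pi : Set (Pattern F ar)} {C : Tm F ar} {p : List ℕ}
    (hp : IsPos C p) {s : Tm F ar} {q : List ℕ}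
    (h : Forbidden Pi s q) : Forbidden Pi (fill C p s) (p ++ q) := by
  obtain ⟨π, hπ, hpp⟩ := h
  refine ⟨π, hπ, ?_⟩
  unfold PPat at hpp ⊢
  cases hflag : π.flag <;> rw [hflag] at hpp
  · exact ptp_lift hpp C p hp
  · obtain ⟨q', hq', hsp⟩ := hpp
    exact ⟨p ++ q', ptp_lift hq' C p hp, strictPrefix_lift hsp⟩
  · obtain ⟨q', hq', hsp⟩ := hpp
    exact ⟨p ++ q', ptp_lift hq' C p hp, strictPrefix_lift hsp⟩

/-- Extraction Lemma, Lemma 3: if `C[s]_p →_{R,Π} C[t]_p` by a step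
at a position at or below `p`, then `s →_{R,Π} t`. -/
theorem extraction_lemma {F : Type} {ar : F → ℕ}
    (R : Set (Rule F ar)) (Pi : Set (Pattern F ar))
    (hR : IsTRS R)
    (hwf : ∀ π ∈ Pi, IsPos π.pat π.pos)
    (C s t : Tm F ar) (p p' : List ℕ)
    (hp : IsPos C p)
    (hge : p <+: p')
    (hstep : FPStepAt R Pi p' (fill C p s) (fill C p t)) :
    FPStep R Pi s t := by
  obtain ⟨q, rfl⟩ := hge
  obtain ⟨⟨r, hr, σ, hsub, hrep⟩, hallow⟩ := hstep
  rw [subtermAt_fill_append p C hp] at hsub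
  rw [replaceAt_fill_append p C hp] at hrep
  obtain ⟨t', ht', heq⟩ := Option.map_eq_some_iff.mp hrep
  have h1 : subtermAt (fill C p t') p = some t' := by
    simpa [subtermAt] using subtermAt_fill_append p C hp t' []
  have h2 : subtermAt (fill C p t) p = some t := by
    simpa [subtermAt] using subtermAt_fill_append p C hp t []
  rw [heq, h2] at h1
  obtain rfl : t = t' := Option.some.inj h1
  refine ⟨q, ⟨r, hr, σ, hsub, ht'⟩, fun hf => hallow (forbidden_lift hp hf)⟩

end FP
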